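/- If the weak restricted isometry constant ϑ = θ(S,2s)/Λ²(S,2s) satisfies ϑ < 1/L, then the restricted eigenvalue satisfies φ(L,S,2s) ≥ (1 − Lϑ)·Λ(S,2s). -/

import Mathlib

/-!
Extend `N` by the largest remaining entries of `|β|` to a set `N'` of size `2s` (or everything);
then every coordinate outside `N'` is at most the average of `|β|` over `N' \ S`. Cutting `N'ᶜ`
into blocks of size `s` in decreasing order of `|β|` and applying the restricted orthogonality
bound blockwise gives `|⟨f_{β_{N'}}, f_{β_{N'ᶜ}}⟩| ≤ θ ‖β_{N'}‖ ‖β_{Sᶜ}‖₁ / √s ≤ Lθ ‖β_{N'}‖²`,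
by the cone condition and Cauchy–Schwarz on `S`. Hence
`⟨f_{β_{N'}}, f_β⟩ ≥ ‖f_{β_{N'}}‖² - Lθ ‖β_{N'}‖²`, and projecting `f_β` onto `f_{β_{N'}}`, whose
norm is at least `Λ ‖β_{N'}‖`, yields `‖f_β‖ ≥ (1 - Lθ/Λ²) Λ ‖β_{N'}‖ ≥ (1 - Lϑ) Λ ‖β_N‖`.
-/

open Finset Matrix

/-- ℓ₁ norm of a vector. -/
noncomputable def l1 {p : ℕ} (v : Fin p → ℝ) : ℝ := ∑ j, |v j|

/-- squared ℓ₂ norm of a vector. -/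
noncomputable def l2sq {p : ℕ} (v : Fin p → ℝ) : ℝ := ∑ j, (v j) ^ 2

/-- Restriction of a vector to an index set (zero outside). -/
noncomputable def rV {p : ℕ} (S : Finset (Fin p)) (v : Fin p → ℝ) : Fin p → ℝ :=
  fun j => if j ∈ S then v j else 0

/-- Quadratic form ‖f_β‖² = βᵀ Σ β. -/
noncomputable def quad {p : ℕ} (M : Matrix (Fin p) (Fin p) ℝ) (v : Fin p → ℝ) : ℝ :=
  v ⬝ᵥ M.mulVec v

/-- Inner product ⟨f_u, f_v⟩ = uᵀ Σ v. -/
noncomputable def quad2 {p : ℕ} (M : Matrix (Fin p) (Fin p) ℝ) (u v : Fin p → ℝ) : ℝ :=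
  u ⬝ᵥ M.mulVec v

theorem l2sq_rV {p : ℕ} (B : Finset (Fin p)) (v : Fin p → ℝ) :
    l2sq (rV B v) = ∑ j ∈ B, v j ^ 2 := by
  simp only [l2sq, rV, ite_pow, zero_pow two_ne_zero, sum_ite_mem, univ_inter]

theorem l1_rV {p : ℕ} (B : Finset (Fin p)) (v : Fin p → ℝ) :
    l1 (rV B v) = ∑ j ∈ B, |v j| := by
  simp only [l1, rV, apply_ite abs, abs_zero, sum_ite_mem, univ_inter]

theorem rV_union {p : ℕ} {A B : Finset (Fin p)} (h : Disjoint A B) (v : Fin p → ℝ) :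
    rV (A ∪ B) v = rV A v + rV B v := by
  funext j
  by_cases hA : j ∈ A
  · simp [rV, hA, disjoint_left.mp h hA]
  · simp [rV, hA]

theorem rV_add_rV_compl {p : ℕ} (N : Finset (Fin p)) (v : Fin p → ℝ) :
    rV N v + rV Nᶜ v = v := by
  funext j
  by_cases h : j ∈ N <;> simp [rV, h]

theorem quad2_add_right {p : ℕ} (M : Matrix (Fin p) (Fin p) ℝ) (u v w : Fin p → ℝ) :
    quad2 M u (v + w) = quad2 M u v + quad2 M u w := by
  simp only [quad2, mulVec_add, dotProduct_add]

theorem quad_nonneg {p : ℕ} {M : Matrix (Fin p) (Fin p) ℝ} (hM : M.PosSemidef)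
    (v : Fin p → ℝ) : 0 ≤ quad M v := by
  simpa [quad] using hM.dotProduct_mulVec_nonneg v

theorem quad2_comm {p : ℕ} {M : Matrix (Fin p) (Fin p) ℝ} (hM : M.PosSemidef)
    (u v : Fin p → ℝ) : quad2 M u v = quad2 M v u := by
  have hMt : Mᵀ = M := by simpa [conjTranspose_eq_transpose_of_trivial] using hM.1.eq
  rw [quad2, quad2, dotProduct_mulVec, ← mulVec_transpose, hMt, dotProduct_comm]

theorem quad2_sq_le {p : ℕ} {M : Matrix (Fin p) (Fin p) ℝ} (hM : M.PosSemidef)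
    (u v : Fin p → ℝ) : quad2 M u v ^ 2 ≤ quad M u * quad M v := by
  have hexpand (t : ℝ) :
      quad M (u + t • v) = quad M v * (t * t) + 2 * quad2 M u v * t + quad M u := by
    have := quad2_comm hM v u
    simp only [quad, quad2] at this ⊢
    simp only [mulVec_add, mulVec_smul, dotProduct_add, add_dotProduct, dotProduct_smul,
      smul_dotProduct, smul_eq_mul, this]
    ring
  have := discrim_le_zero fun t => hexpand t ▸ quad_nonneg hM (u + t • v)
  rw [discrim] at this
  linarith

/-- The projection lemma: if `‖u‖² = q ≥ w` and `⟨u, v⟩ ≥ q - κ w` with `0 ≤ κ ≤ 1`, then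
`‖v‖ ≥ ⟨u, v⟩ / ‖u‖ ≥ (1 - κ) √w`. -/
theorem one_sub_sq_mul_le_of_sq_le_mul {κ w q c Q : ℝ} (hκ₀ : 0 ≤ κ) (hκ₁ : κ ≤ 1)
    (hw : 0 ≤ w) (hwq : w ≤ q) (hc : q - κ * w ≤ c) (hcQ : c ^ 2 ≤ q * Q) (hQ : 0 ≤ Q) :
    (1 - κ) ^ 2 * w ≤ Q := by
  rcases hw.eq_or_lt with rfl | hw
  · simpa using hQ
  have hq : 0 < q := hw.trans_le hwq
  have hκw : 0 ≤ q - κ * w := by nlinarith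
  -- `(q - κ w)² - (1 - κ)² w q = (q - w) (q - κ² w) ≥ 0`
  have key : (1 - κ) ^ 2 * w * q ≤ (q - κ * w) ^ 2 := by
    nlinarith [mul_nonneg (sub_nonneg.mpr hwq) (by nlinarith : 0 ≤ q - κ ^ 2 * w)]
  have : (q - κ * w) ^ 2 ≤ c ^ 2 := pow_le_pow_left₀ hκw hc 2
  nlinarith

theorem Finset.exists_subset_card_eq_forall_sdiff_le {α β : Type*} [DecidableEq α]
    [LinearOrder β] (f : α → β) (T : Finset α) {k : ℕ} (hk : k ≤ T.card) :
    ∃ B ⊆ T, B.card = k ∧ ∀ j ∈ T \ B, ∀ i ∈ B, f j ≤ f i := by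
  induction k with
  | zero => exact ⟨∅, empty_subset T, rfl, by simp⟩
  | succ k ih =>
    obtain ⟨B, hBT, hBcard, hBtop⟩ := ih (Nat.le_of_succ_le hk)
    have hne : (T \ B).Nonempty := by
      rw [← card_pos, card_sdiff_of_subset hBT, hBcard]
      omega
    obtain ⟨i₀, hi₀, hmax⟩ := exists_max_image (T \ B) f hne
    rw [mem_sdiff] at hi₀
    refine ⟨insert i₀ B, insert_subset hi₀.1 hBT, by rw [card_insert_of_notMem hi₀.2, hBcard],
      fun j hj i hi => ?_⟩
    have hj' : j ∈ T \ B := by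
      simp only [mem_sdiff, mem_insert, not_or] at hj ⊢
      exact ⟨hj.1, hj.2.2⟩
    rcases mem_insert.mp hi with rfl | hiB
    · exact hmax j hj'
    · exact hBtop j hj' i hiB

theorem mul_sum_sq_le_mul_sum_abs {ι : Type*} {B : Finset ι} {v : ι → ℝ} {s c : ℝ}
    (hv : ∀ j ∈ B, s * |v j| ≤ c) : s * ∑ j ∈ B, v j ^ 2 ≤ c * ∑ j ∈ B, |v j| := by
  rw [mul_sum, mul_sum]
  refine sum_le_sum fun j hj => ?_
  rw [← sq_abs]
  nlinarith [hv j hj, abs_nonneg (v j)]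

/-- Shelling: cut `T` into consecutive blocks of the `s` largest remaining entries of `|v|`;
each block is bounded by the ℓ₁-mass of the previous one, the first one by `c`. -/
theorem sqrt_mul_abs_le_of_blocks {ι : Type*} [DecidableEq ι] {s : ℕ} (hs : 0 < s)
    {F : Finset ι → ℝ} {v : ι → ℝ} {K : ℝ} (hK : 0 ≤ K) {T₀ : Finset ι}
    (hadd : ∀ B C : Finset ι, Disjoint B C → F (B ∪ C) = F B + F C)
    (hblock : ∀ B ⊆ T₀, B.card ≤ s → |F B| ≤ K * √(∑ j ∈ B, v j ^ 2)) :
    ∀ T ⊆ T₀, ∀ c : ℝ, 0 ≤ c → (∀ j ∈ T, s * |v j| ≤ c) →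
      √s * |F T| ≤ K * (c + ∑ j ∈ T, |v j|) := by
  have hblock' : ∀ B ⊆ T₀, B.card ≤ s → ∀ X : ℝ, 0 ≤ X → s * ∑ j ∈ B, v j ^ 2 ≤ X ^ 2 →
      √s * |F B| ≤ K * X := by
    intro B hB hBs X hX hBX
    have : √s * √(∑ j ∈ B, v j ^ 2) ≤ X := by
      rw [← Real.sqrt_mul (Nat.cast_nonneg s), Real.sqrt_le_left hX]
      exact hBX
    calc √s * |F B| ≤ √s * (K * √(∑ j ∈ B, v j ^ 2)) := by
          gcongr; exact hblock B hB hBs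
      _ ≤ K * X := by nlinarith
  intro T
  induction T using Finset.strongInduction with
  | _ T ih =>
    intro hT c hc hv
    have hℓ : 0 ≤ ∑ j ∈ T, |v j| := sum_nonneg fun j _ => abs_nonneg _
    by_cases hcard : T.card ≤ s
    · refine hblock' T hT hcard _ (by positivity) ((mul_sum_sq_le_mul_sum_abs hv).trans ?_)
      nlinarith
    obtain ⟨B, hBT, hBcard, hBtop⟩ :=
      exists_subset_card_eq_forall_sdiff_le (fun j => |v j|) T (le_of_not_ge hcard)
    have hFB : √s * |F B| ≤ K * c := by
      refine hblock' B (hBT.trans hT) hBcard.le c hc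
        ((mul_sum_sq_le_mul_sum_abs fun j hj => hv j (hBT hj)).trans ?_)
      have hsum : (s : ℝ) * ∑ j ∈ B, |v j| ≤ s * c := by
        rw [mul_sum]
        simpa [hBcard] using sum_le_sum fun j hj => hv j (hBT hj)
      have : ∑ j ∈ B, |v j| ≤ c := le_of_mul_le_mul_left hsum (by exact_mod_cast hs)
      nlinarith
    have hFTB : √s * |F (T \ B)| ≤ K * (∑ i ∈ B, |v i| + ∑ j ∈ T \ B, |v j|) := by
      refine ih (T \ B) (sdiff_ssubset hBT ?_) (sdiff_subset.trans hT) _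
        (sum_nonneg fun i _ => abs_nonneg _) fun j hj => ?_
      · rw [← card_pos, hBcard]; exact hs
      · have := card_nsmul_le_sum B (fun i => |v i|) _ (hBtop j hj)
        rwa [hBcard, nsmul_eq_mul] at this
    have hsplit : F T = F B + F (T \ B) := by
      rw [← hadd B (T \ B) disjoint_sdiff, union_sdiff_of_subset hBT]
    calc √s * |F T| ≤ √s * |F B| + √s * |F (T \ B)| := by
          rw [hsplit, ← mul_add]; gcongr; exact abs_add_le _ _
      _ ≤ K * (c + ∑ j ∈ T, |v j|) := by
          rw [← sum_sdiff hBT]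
          linarith

theorem exists_superset_card_le_forall_card_mul_le_sum {α : Type*} [Fintype α] [DecidableEq α]
    (f : α → ℝ) {S N : Finset α} {s : ℕ} (hS : S.card = s) (hSN : S ⊆ N)
    (hN : N.card ≤ 2 * s) (hdom : ∀ j ∉ N, ∀ i ∈ N \ S, f j ≤ f i) :
    ∃ N', N ⊆ N' ∧ N'.card ≤ 2 * s ∧ ∀ j ∉ N', s * f j ≤ ∑ i ∈ N' \ S, f i := by
  have hk : min (2 * s) (Fintype.card α) - N.card ≤ Nᶜ.card := by
    rw [card_compl]; omega
  obtain ⟨B, hBN, hBcard, hBtop⟩ := exists_subset_card_eq_forall_sdiff_le f Nᶜ hk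
  have hdisj : Disjoint N B := (subset_compl_iff_disjoint_right.mp hBN).symm
  have hcard : (N ∪ B).card = min (2 * s) (Fintype.card α) := by
    rw [card_union_of_disjoint hdisj, hBcard]
    have := N.card_le_univ
    omega
  refine ⟨N ∪ B, subset_union_left, by omega, fun j hj => ?_⟩
  -- `N ∪ B` misses `j`, so it is not everything and has exactly `2 s` elements.
  have hlt : (N ∪ B).card < Fintype.card α := card_lt_univ_of_notMem hj
  have hcardS : ((N ∪ B) \ S).card = s := by
    rw [card_sdiff_of_subset (hSN.trans subset_union_left), hS]
    omega
  have hjN : j ∉ N := fun h => hj (mem_union_left _ h)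
  have := card_nsmul_le_sum ((N ∪ B) \ S) f (f j) fun i hi => by
    obtain ⟨hiNB, hiS⟩ := mem_sdiff.mp hi
    rcases mem_union.mp hiNB with hiN | hiB
    · exact hdom j hjN i (mem_sdiff.mpr ⟨hiN, hiS⟩)
    · exact hBtop j (mem_sdiff.mpr ⟨mem_compl.mpr hjN, fun h => hj (mem_union_right _ h)⟩) i hiB
  rwa [hcardS, nsmul_eq_mul] at this

theorem l1_rV_le_sqrt_mul {p : ℕ} {S N : Finset (Fin p)} (hSN : S ⊆ N) (β : Fin p → ℝ) :
    l1 (rV S β) ≤ √S.card * √(l2sq (rV N β)) := by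
  rw [l1_rV, l2sq_rV, ← Real.sqrt_mul (Nat.cast_nonneg _),
    Real.le_sqrt (by positivity) (by positivity)]
  calc (∑ j ∈ S, |β j|) ^ 2 ≤ S.card * ∑ j ∈ S, |β j| ^ 2 := sq_sum_le_card_mul_sum_sq
    _ ≤ S.card * ∑ j ∈ N, β j ^ 2 := by
      simp only [sq_abs]
      gcongr

theorem abs_quad2_rV_compl_le {p : ℕ} (M : Matrix (Fin p) (Fin p) ℝ)
    {S N : Finset (Fin p)} {s : ℕ} (hs : S.card = s) (hs0 : 1 ≤ s) {L θ : ℝ} (hL : 0 < L)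
    (hθ : 0 ≤ θ) (hSN : S ⊆ N)
    (horth : ∀ Ms : Finset (Fin p), Disjoint Ms N → Ms.card ≤ s → ∀ β γ : Fin p → ℝ,
      |quad2 M (rV N β) (rV Ms γ)| ≤
        θ * Real.sqrt (l2sq (rV N β)) * Real.sqrt (l2sq (rV Ms γ)))
    {β : Fin p → ℝ} (hcone : l1 (rV Sᶜ β) ≤ L * l1 (rV S β))
    (hdom : ∀ j ∉ N, s * |β j| ≤ ∑ i ∈ N \ S, |β i|) :
    |quad2 M (rV N β) (rV Nᶜ β)| ≤ L * θ * l2sq (rV N β) := by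
  set x := √(l2sq (rV N β))
  have hs' : (0 : ℝ) < √s := Real.sqrt_pos.mpr (by exact_mod_cast hs0)
  have hblocks := sqrt_mul_abs_le_of_blocks hs0 (F := fun B => quad2 M (rV N β) (rV B β))
    (v := β) (K := θ * x) (by positivity) (T₀ := Nᶜ)
    (fun B C hBC => by simp only [rV_union hBC, quad2_add_right])
    (fun B hB hBs => by
      have := horth B (subset_compl_iff_disjoint_right.mp hB) hBs β β
      rwa [l2sq_rV B] at this)
    Nᶜ subset_rfl _ (sum_nonneg fun i _ => abs_nonneg _) fun j hj => hdom j (mem_compl.mp hj)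
  have hsplit : ∑ i ∈ N \ S, |β i| + ∑ j ∈ Nᶜ, |β j| = l1 (rV Sᶜ β) := by
    rw [← sum_union (disjoint_compl_right.mono_left sdiff_subset), l1_rV]
    congr 1
    ext j
    have := @hSN j
    simp only [mem_union, mem_sdiff, mem_compl]
    tauto
  have hl1 : l1 (rV Sᶜ β) ≤ L * (√s * x) :=
    hcone.trans (by rw [← hs]; gcongr; exact l1_rV_le_sqrt_mul hSN β)
  have : √s * |quad2 M (rV N β) (rV Nᶜ β)| ≤ √s * (L * θ * x ^ 2) := by
    calc _ ≤ θ * x * l1 (rV Sᶜ β) := by rw [← hsplit]; exact hblocks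
      _ ≤ θ * x * (L * (√s * x)) := by gcongr
      _ = √s * (L * θ * x ^ 2) := by ring
  rw [Real.sq_sqrt (by rw [l2sq_rV]; positivity)] at this
  exact le_of_mul_le_mul_left this hs'

theorem sq_mul_l2sq_le_quad_of_dominated {p : ℕ} {M : Matrix (Fin p) (Fin p) ℝ}
    (hM : M.PosSemidef) {S N : Finset (Fin p)} {s : ℕ} (hs : S.card = s) (hs0 : 1 ≤ s)
    {L θ Λ : ℝ} (hL : 0 < L) (hθ : 0 ≤ θ) (hΛ : 0 < Λ) (hwRIP : L * (θ / Λ ^ 2) < 1)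
    (hSN : S ⊆ N)
    (horth : ∀ Ms : Finset (Fin p), Disjoint Ms N → Ms.card ≤ s → ∀ β γ : Fin p → ℝ,
      |quad2 M (rV N β) (rV Ms γ)| ≤
        θ * Real.sqrt (l2sq (rV N β)) * Real.sqrt (l2sq (rV Ms γ)))
    {β : Fin p → ℝ} (heig : Λ ^ 2 * l2sq (rV N β) ≤ quad M (rV N β))
    (hcone : l1 (rV Sᶜ β) ≤ L * l1 (rV S β))
    (hdom : ∀ j ∉ N, s * |β j| ≤ ∑ i ∈ N \ S, |β i|) :
    ((1 - L * (θ / Λ ^ 2)) * Λ) ^ 2 * l2sq (rV N β) ≤ quad M β := by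
  have hcross := abs_quad2_rV_compl_le M hs hs0 hL hθ hSN horth hcone hdom
  have hsplit : quad2 M (rV N β) β = quad M (rV N β) + quad2 M (rV N β) (rV Nᶜ β) := by
    have h := quad2_add_right M (rV N β) (rV N β) (rV Nᶜ β)
    rwa [rV_add_rV_compl] at h
  have hκw : L * (θ / Λ ^ 2) * (Λ ^ 2 * l2sq (rV N β)) = L * θ * l2sq (rV N β) := by
    field_simp
  calc ((1 - L * (θ / Λ ^ 2)) * Λ) ^ 2 * l2sq (rV N β)
      = (1 - L * (θ / Λ ^ 2)) ^ 2 * (Λ ^ 2 * l2sq (rV N β)) := by ring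
    _ ≤ quad M β := by
      refine one_sub_sq_mul_le_of_sq_le_mul (by positivity) hwRIP.le
        (by rw [l2sq_rV]; positivity) heig ?_ (hsplit ▸ quad2_sq_le hM _ _) (quad_nonneg hM β)
      rw [hκw]
      linarith [neg_abs_le (quad2 M (rV N β) (rV Nᶜ β))]

/-- If ϑ = θ(S,2s)/Λ²(S,2s) < 1/L, then φ(L,S,2s) ≥ (1 − Lϑ)·Λ(S,2s). -/
theorem stmt12 {p : ℕ} (M : Matrix (Fin p) (Fin p) ℝ) (hM : M.PosSemidef)
    (S : Finset (Fin p)) (s : ℕ) (hs : S.card = s) (hs0 : 1 ≤ s)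
    (L θ Λ : ℝ) (hL : 0 < L) (hθ : 0 ≤ θ) (hΛ : 0 < Λ)
    -- weak (S,2s)-restricted isometry property: ϑ = θ/Λ² < 1/L
    (hwRIP : L * (θ / Λ ^ 2) < 1)
    -- θ is the (S,2s)-restricted orthogonality constant (as an upper bound)
    (horth : ∀ Ns : Finset (Fin p), S ⊆ Ns → Ns.card ≤ 2 * s →
      ∀ Ms : Finset (Fin p), Disjoint Ms Ns → Ms.card ≤ s →
      ∀ β γ : Fin p → ℝ,
        |quad2 M (rV Ns β) (rV Ms γ)| ≤
          θ * Real.sqrt (l2sq (rV Ns β)) * Real.sqrt (l2sq (rV Ms γ)))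
    -- Λ² is the (S,2s)-uniform eigenvalue (as a lower bound)
    (heig : ∀ Ns : Finset (Fin p), S ⊆ Ns → Ns.card ≤ 2 * s →
      ∀ v : Fin p → ℝ, (∀ j ∉ Ns, v j = 0) → Λ ^ 2 * l2sq v ≤ quad M v) :
    -- restricted eigenvalue bound: φ(L,S,2s) ≥ (1 − Lϑ)Λ
    ∀ Ns : Finset (Fin p), S ⊆ Ns → Ns.card ≤ 2 * s →
      ∀ β : Fin p → ℝ, l1 (rV Sᶜ β) ≤ L * l1 (rV S β) →
      (∀ j ∉ Ns, ∀ i ∈ Ns \ S, |β j| ≤ |β i|) →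
      ((1 - L * (θ / Λ ^ 2)) * Λ) ^ 2 * l2sq (rV Ns β) ≤ quad M β := by
  intro N hSN hN β hcone hdom
  obtain ⟨N', hNN', hN', hdom'⟩ :=
    exists_superset_card_le_forall_card_mul_le_sum (fun j => |β j|) hs hSN hN hdom
  have hSN' := hSN.trans hNN'
  calc ((1 - L * (θ / Λ ^ 2)) * Λ) ^ 2 * l2sq (rV N β)
      ≤ ((1 - L * (θ / Λ ^ 2)) * Λ) ^ 2 * l2sq (rV N' β) := by
        rw [l2sq_rV, l2sq_rV]; gcongr
    _ ≤ quad M β :=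
        sq_mul_l2sq_le_quad_of_dominated hM hs hs0 hL hθ hΛ hwRIP hSN' (horth N' hSN' hN')
          (heig N' hSN' hN' _ fun j hj => if_neg hj) hcone hdom'
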